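/- In the full-information line framework, suppose the mechanism (ρ, W) has distortion strictly smaller than 3, i.e., max(SW(I,0), SW(I,1)) < 3·SW(I, win(I)) for every instance I. Then for every group S all of whose elements equal a common value x: if x ∈ [3/4, 1] then ρ(S) = 0, and if x ∈ [0, 1/4] then ρ(S) = 1. -/
import Mathlib


/-! Full-information line framework: the two alternatives are the reals 0 and 1.
A group is a finite nonempty multiset of reals in `[0,1]`; an instance is a finite
nonempty multiset of groups. -/

/-- Social welfare of alternative `x` in instance `I`. -/
noncomputable def SWfull (I : Multiset (Multiset ℝ)) (x : ℝ) : ℝ :=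
  (I.map (fun S => (S.map (fun p => |p - x|)).sum)).sum

/-- Winner of instance `I` under the mechanism `(ρ, W)`: `W` applied to the multiset of
pairs (representative, group size). -/
noncomputable def winFull (ρ : Multiset ℝ → ℝ) (W : Multiset (ℝ × ℕ) → ℝ)
    (I : Multiset (Multiset ℝ)) : ℝ :=
  W (I.map (fun S => (ρ S, Multiset.card S)))

/-- A valid instance: a finite nonempty multiset of nonempty groups of reals in `[0,1]`. -/
def ValidInstanceFull (I : Multiset (Multiset ℝ)) : Prop :=
  I ≠ 0 ∧ ∀ S ∈ I, S ≠ 0 ∧ ∀ p ∈ S, p ∈ Set.Icc (0 : ℝ) 1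

/-- A valid full-information distributed mechanism: `ρ` assigns to every group a
representative in `{0,1}`, and `W` assigns to every finite nonempty multiset of pairs
(representative, positive group size) a winner occurring as a first component. -/
def ValidMechFull (ρ : Multiset ℝ → ℝ) (W : Multiset (ℝ × ℕ) → ℝ) : Prop :=
  (∀ S : Multiset ℝ, S ≠ 0 → (∀ p ∈ S, p ∈ Set.Icc (0 : ℝ) 1) → ρ S = 0 ∨ ρ S = 1) ∧
  (∀ m : Multiset (ℝ × ℕ), m ≠ 0 → (∀ q ∈ m, (q.1 = 0 ∨ q.1 = 1) ∧ 0 < q.2) →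
    W m ∈ m.map Prod.fst)

/-- Any full-information mechanism with distortion strictly smaller
than 3 must represent a group of agents co-located at `x` by alternative 0 when
`x ∈ [3/4, 1]` and by alternative 1 when `x ∈ [0, 1/4]`. -/
lemma sum_map_const_val {s : Multiset ℝ} {f : ℝ → ℝ} {c : ℝ} (h : ∀ a ∈ s, f a = c) :
    (s.map f).sum = (Multiset.card s : ℝ) * c := by
  rw [Multiset.map_congr rfl h, Multiset.map_const', Multiset.sum_replicate, nsmul_eq_mul]

lemma key_setup (ρ : Multiset ℝ → ℝ) (W : Multiset (ℝ × ℕ) → ℝ)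
    (hmech : ValidMechFull ρ W)
    (hdist : ∀ I : Multiset (Multiset ℝ), ValidInstanceFull I →
      max (SWfull I 0) (SWfull I 1) < 3 * SWfull I (winFull ρ W I))
    (x : ℝ) (S : Multiset ℝ) (hS : S ≠ 0) (hx : ∀ p ∈ S, p = x)
    (hx0 : 0 ≤ x) (hx1 : x ≤ 1) :
    max ((Multiset.card S : ℝ) * |x - 0|) ((Multiset.card S : ℝ) * |x - 1|)
      < 3 * ((Multiset.card S : ℝ) * |x - ρ S|) := by
  have hx01 : ∀ p ∈ S, p ∈ Set.Icc (0:ℝ) 1 := fun p hp => (hx p hp) ▸ ⟨hx0, hx1⟩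
  have hcard : 0 < Multiset.card S := Multiset.card_pos.mpr hS
  set I : Multiset (Multiset ℝ) := {S} with hI
  have hvalid : ValidInstanceFull I := by
    refine ⟨by simp [hI], ?_⟩
    intro T hT
    rw [hI, Multiset.mem_singleton] at hT
    subst hT; exact ⟨hS, hx01⟩
  have hm : I.map (fun T => (ρ T, Multiset.card T)) = {(ρ S, Multiset.card S)} := by
    simp [hI]
  have hwin : winFull ρ W I = ρ S := by
    have hmem := hmech.2 ({(ρ S, Multiset.card S)}) (by simp)
      (by intro q hq
          rw [Multiset.mem_singleton] at hq
          subst hq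
          exact ⟨hmech.1 S hS hx01, hcard⟩)
    rw [Multiset.map_singleton, Multiset.mem_singleton] at hmem
    rw [winFull, hm]
    exact hmem
  have hSW : ∀ y : ℝ, SWfull I y = (Multiset.card S : ℝ) * |x - y| := by
    intro y
    rw [SWfull, hI, Multiset.map_singleton, Multiset.sum_singleton]
    exact sum_map_const_val (fun p hp => by rw [hx p hp])
  have hd := hdist I hvalid
  rw [hwin, hSW, hSW, hSW] at hd
  exact hd

theorem full_info_colocated_representative
    (ρ : Multiset ℝ → ℝ) (W : Multiset (ℝ × ℕ) → ℝ)
    (hmech : ValidMechFull ρ W)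
    (hdist : ∀ I : Multiset (Multiset ℝ), ValidInstanceFull I →
      max (SWfull I 0) (SWfull I 1) < 3 * SWfull I (winFull ρ W I)) :
    ∀ (x : ℝ) (S : Multiset ℝ), S ≠ 0 → (∀ p ∈ S, p = x) →
      (3 / 4 ≤ x → x ≤ 1 → ρ S = 0) ∧ (0 ≤ x → x ≤ 1 / 4 → ρ S = 1) := by
  intro x S hS hx
  have hcard : 0 < Multiset.card S := Multiset.card_pos.mpr hS
  have hn1 : (1 : ℝ) ≤ (Multiset.card S : ℝ) := by exact_mod_cast hcard
  constructor
  · intro h34 h1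
    have h0x : (0:ℝ) ≤ x := by linarith
    have key := key_setup ρ W hmech hdist x S hS hx h0x h1
    have hρ := hmech.1 S hS (fun p hp => (hx p hp) ▸ ⟨h0x, h1⟩)
    rcases hρ with h | h
    · exact h
    · exfalso
      rw [h] at key
      have e0 : |x - (0:ℝ)| = x := by rw [sub_zero, abs_of_nonneg h0x]
      have e1 : |x - (1:ℝ)| = 1 - x := by rw [abs_of_nonpos (by linarith), neg_sub]
      rw [e0, e1] at key
      have hle := le_max_left ((Multiset.card S : ℝ) * x) ((Multiset.card S : ℝ) * (1 - x))
      nlinarith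
  · intro h0x h14
    have h1 : x ≤ 1 := by linarith
    have key := key_setup ρ W hmech hdist x S hS hx h0x h1
    have hρ := hmech.1 S hS (fun p hp => (hx p hp) ▸ ⟨h0x, h1⟩)
    rcases hρ with h | h
    · exfalso
      rw [h] at key
      have e0 : |x - (0:ℝ)| = x := by rw [sub_zero, abs_of_nonneg h0x]
      have e1 : |x - (1:ℝ)| = 1 - x := by rw [abs_of_nonpos (by linarith), neg_sub]
      rw [e0, e1] at key
      have hle := le_max_right ((Multiset.card S : ℝ) * x) ((Multiset.card S : ℝ) * (1 - x))
      nlinarith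
    · exact h
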